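/- arXiv:math/0306273 — 6 statements merged into one kernel-verified Lean document; each statement's English description precedes it below -/
import Mathlib

section
/- If in addition d• : A → Ω¹ is a derivation to O(ℏ²) with d•x = dx + O(ℏ), then the preconnection γ is compatible with the Poisson bracket: d{x,y} = γ(x, dy) − γ(y, dx) for all x,y. -/
/-- Same deformation setting as Statements 1,2, with in addition a
deformed differential `d• = d0 + ℏ d1 + O(ℏ²)` which is a derivation to O(ℏ²):
the hypothesis `hLeib` is the O(ℏ) coefficient of
`d•(a•b) = (d•a)•b + a•(d•b) + O(ℏ²)` (the O(1) part is the classical Leibniz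
rule).  Conclusion: the preconnection `γ x τ = lam x τ − rho x τ` is compatible
with the Poisson bracket `{x,y} = B x y − B y x`, i.e.
`d{x,y} = γ(x, dy) − γ(y, dx)`. -/
theorem stmt3 {R M : Type*} [CommRing R] [AddCommGroup M] [Module R M]
    (B : R → R → R) (lam rho : R → M → M) (d0 d1 : R → M)
    (h1 : ∀ (x y : R) (τ : M), B x y • τ + lam (x * y) τ = x • lam y τ + lam x (y • τ))
    (h2 : ∀ (x y : R) (τ : M), B x y • τ + rho (x * y) τ = y • rho x τ + rho y (x • τ))
    (h3 : ∀ (x y : R) (τ : M), y • lam x τ + rho y (x • τ) = x • rho y τ + lam x (y • τ))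
    (hd0add : ∀ a b : R, d0 (a + b) = d0 a + d0 b)
    (hLeib : ∀ a b : R,
      d1 (a * b) + d0 (B a b)
        = b • d1 a + rho b (d0 a) + a • d1 b + lam a (d0 b)) :
    ∀ x y : R,
      d0 (B x y - B y x)
        = (lam x (d0 y) - rho x (d0 y)) - (lam y (d0 x) - rho y (d0 x)) := by
  intro x y
  have h0 : d0 0 = 0 := by
    have := hd0add 0 0
    simpa using this
  have hneg : ∀ a : R, d0 (-a) = -d0 a := by
    intro a
    have := hd0add a (-a)
    rw [add_neg_cancel, h0] at this
    exact eq_neg_of_add_eq_zero_right this.symm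
  have hsub : d0 (B x y - B y x) = d0 (B x y) - d0 (B y x) := by
    rw [sub_eq_add_neg, hd0add, hneg, sub_eq_add_neg]
  have key := hLeib x y
  have key' := hLeib y x
  rw [mul_comm y x] at key'
  have : d0 (B x y) - d0 (B y x)
      = (y • d1 x + rho y (d0 x) + x • d1 y + lam x (d0 y))
        - (x • d1 y + rho x (d0 y) + y • d1 x + lam y (d0 x)) := by
    have e1 : d0 (B x y) = (y • d1 x + rho y (d0 x) + x • d1 y + lam x (d0 y)) - d1 (x*y) := by
      rw [← key]; abel
    have e2 : d0 (B y x) = (x • d1 y + rho x (d0 y) + y • d1 x + lam y (d0 x)) - d1 (x*y) := by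
      rw [← key']; abel
    rw [e1, e2]; abel
  rw [hsub, this]; abel
end

section
/- For a compatible preconnection γ on a Poisson manifold (satisfying d{x,y} = γ(x,dy) − γ(y,dx)), the torsion T(x̂,ŷ) = ∇̂_x ŷ − ∇̂_y x̂ − {x,y}^ satisfies the cyclic identity ⟨T(x̂,ŷ), dz⟩ + ⟨T(ŷ,ẑ), dx⟩ + ⟨T(ẑ,x̂), dy⟩ = 0 for all x,y,z ∈ C^∞(M). -/
/-- For a compatible preconnection `γ` on a Poisson manifold
(satisfying `d{x,y} = γ(x,dy) − γ(y,dx)`), the torsion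
`T(x̂,ŷ) = ∇̂_x ŷ − ∇̂_y x̂ − {x,y}^` satisfies the cyclic identity
`⟨T(x̂,ŷ),dz⟩ + ⟨T(ŷ,ẑ),dx⟩ + ⟨T(ẑ,x̂),dy⟩ = 0`.
Here `R` is the ring of functions with Poisson bracket `P` (antisymmetric,
Jacobi), `M` the 1-forms, `V` the vector fields with pairing `pair`,
`ham x = x̂` the Hamiltonian vector field (`⟨x̂, dy⟩ = {x,y}`), and `∇̂` on
vector fields is determined by `⟨∇̂_x v, τ⟩ = x̂⟨v,τ⟩ − ⟨v, ∇̂_x τ⟩`. -/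
theorem stmt6 {R M V : Type*} [CommRing R] [AddCommGroup M] [AddCommGroup V]
    (P : R → R → R) (γ : R → M → M) (d : R → M)
    (pair : V → M → R) (ham : R → V) (nablaV : R → V → V)
    (hPanti : ∀ x y, P x y = - P y x)
    (hJac : ∀ x y z, P x (P y z) + P y (P z x) + P z (P x y) = 0)
    (hpair1 : ∀ (u v : V) (τ : M), pair (u + v) τ = pair u τ + pair v τ)
    (hpair1' : ∀ (v : V) (τ : M), pair (-v) τ = - pair v τ)
    (hpair2 : ∀ (v : V) (τ σ : M), pair v (τ + σ) = pair v τ + pair v σ)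
    (hham : ∀ x y, pair (ham x) (d y) = P x y)
    (hnab : ∀ (x : R) (v : V) (τ : M),
      pair (nablaV x v) τ = P x (pair v τ) - pair v (γ x τ))
    (hcompat : ∀ x y, d (P x y) = γ x (d y) - γ y (d x)) :
    ∀ x y z : R,
      pair (nablaV x (ham y) - nablaV y (ham x) - ham (P x y)) (d z)
        + pair (nablaV y (ham z) - nablaV z (ham y) - ham (P y z)) (d x)
        + pair (nablaV z (ham x) - nablaV x (ham z) - ham (P z x)) (d y) = 0 := by
  intro x y z
  have key : ∀ (c a b : R), pair (ham c) (γ a (d b))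
      = P c (P a b) + pair (ham c) (γ b (d a)) := by
    intro c a b
    have h : γ a (d b) = d (P a b) + γ b (d a) := by
      rw [hcompat a b]; abel
    rw [h, hpair2, hham]
  simp only [sub_eq_add_neg, hpair1, hpair1', hnab, hham]
  rw [key y x z, key z y x, key x z y]
  linear_combination 2*hJac x y z - 2*hJac y x z
    - hPanti (P x y) z - hPanti (P y z) x - hPanti (P z x) y
end

section
/- In the symplectic case, the 2-form ω commutes with all functions under the deformed product to O(ℏ²) if and only if the associated connection ∇ preserves ω (∇ω = 0) and is torsion free. Equivalently (in Darboux coordinates where ω_{ij} is constant): the lowered symbols Γ_{ikj} = ω_{il}Γ^l_{kj} are totally symmetric if and only if ω^{iq}Γ^j_{nq} + ω^{qj}Γ^i_{nq} = 0 and ∂ω^{ij}/∂x^n + ω^{iq}Γ^j_{qn} + ω^{qj}Γ^i_{qn} = 0 hold. -/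
private lemma dcontract {K ι : Type*} [Field K] [Fintype ι] [DecidableEq ι]
    (P Q : ι → ι → K) (c : K)
    (h : ∀ a q, (∑ i, P a i * Q i q) = if a = q then c else 0)
    (G : ι → K) (a : ι) :
    (∑ i, ∑ q, P a i * (Q i q * G q)) = c * G a := by
  rw [Finset.sum_comm]
  calc (∑ q, ∑ i, P a i * (Q i q * G q))
      = ∑ q, (∑ i, P a i * Q i q) * G q := by
        refine Finset.sum_congr rfl fun q _ => ?_
        rw [Finset.sum_mul]; exact Finset.sum_congr rfl fun i _ => by ring
    _ = ∑ q, (if a = q then c else 0) * G q := by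
        exact Finset.sum_congr rfl fun q _ => by rw [h]
    _ = c * G a := by simp

private lemma tcontract {K ι : Type*} [Field K] [Fintype ι] [DecidableEq ι]
    (P Q : ι → ι → K) (c : K)
    (h : ∀ a q, (∑ i, P a i * Q i q) = if a = q then c else 0)
    (R : ι → K) (G : ι → ι → K) (a : ι) :
    (∑ x, ∑ y, ∑ q, P a x * Q x q * (R y * G y q)) = c * (∑ y, R y * G y a) := by
  rw [Finset.sum_comm, Finset.mul_sum]
  refine Finset.sum_congr rfl fun y _ => ?_
  calc (∑ x, ∑ q, P a x * Q x q * (R y * G y q))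
      = ∑ x, ∑ q, P a x * (Q x q * (R y * G y q)) := by
        exact Finset.sum_congr rfl fun x _ => Finset.sum_congr rfl fun q _ => by ring
    _ = c * (R y * G y a) := dcontract P Q c h (fun q => R y * G y q) a



/-- The algebraic core of Proposition 3.3 (centrality of the
symplectic form): in Darboux coordinates with constant antisymmetric invertible
`ω^{ij}` (inverse `ωl = ω_{ij}`), the lowered Christoffel symbols
`Γ_{ikj} = ω_{il} Γ^l_{kj}` are totally symmetric (equivalently the connection
is torsion free and preserves `ω`, i.e. the 2-form `ω` is central to O(ℏ²))
if and only if both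
`ω^{iq} Γ^j_{nq} + ω^{qj} Γ^i_{nq} = 0` (the connection preserves `ω`) and
`ω^{iq} Γ^j_{qn} + ω^{qj} Γ^i_{qn} = 0` (the compatibility condition
`∂ω^{ij}/∂x^n + ω^{iq}Γ^j_{qn} + ω^{qj}Γ^i_{qn} = 0` with constant `ω`). -/
theorem stmt8 {K ι : Type*} [Field K] [Fintype ι] [DecidableEq ι]
    (ω ωl : ι → ι → K) (Γ : ι → ι → ι → K)
    (hanti : ∀ i j, ω i j = - ω j i)
    (hud : ∀ i k, ∑ j, ω i j * ωl j k = if i = k then 1 else 0)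
    (hdu : ∀ i k, ∑ j, ωl i j * ω j k = if i = k then 1 else 0) :
    (∀ i k j, (∑ l, ωl i l * Γ l k j) = (∑ l, ωl k l * Γ l i j) ∧
              (∑ l, ωl i l * Γ l k j) = (∑ l, ωl j l * Γ l k i))
    ↔ ((∀ i j n, ∑ q, (ω i q * Γ j n q + ω q j * Γ i n q) = 0) ∧
       (∀ i j n, ∑ q, (ω i q * Γ j q n + ω q j * Γ i q n) = 0)) := by
  have hdu' : ∀ b q, (∑ j, ωl b j * ω q j) = if b = q then (-1:K) else 0 := by
    intro b q
    have h1 : (∑ j, ωl b j * ω q j) = -(∑ j, ωl b j * ω j q) := by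
      rw [← Finset.sum_neg_distrib]
      exact Finset.sum_congr rfl fun j _ => by rw [hanti q j]; ring
    rw [h1, hdu]; split <;> simp
  have hraise : ∀ l k j', (∑ a, ω l a * (∑ m, ωl a m * Γ m k j')) = Γ l k j' := by
    intro l k j'
    have h := dcontract ω ωl 1 hud (fun m => Γ m k j') l
    calc (∑ a, ω l a * (∑ m, ωl a m * Γ m k j'))
        = ∑ a, ∑ m, ω l a * (ωl a m * Γ m k j') :=
          Finset.sum_congr rfl fun a _ => Finset.mul_sum _ _ _
      _ = Γ l k j' := by rw [h]; ring
  -- Condition A (∇ preserves ω) ↔ symmetry of T in the 1st and 3rd indices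
  have hA : (∀ i j n, ∑ q, (ω i q * Γ j n q + ω q j * Γ i n q) = 0) ↔
      (∀ i k j, (∑ l, ωl i l * Γ l k j) = (∑ l, ωl j l * Γ l k i)) := by
    constructor
    · intro H i k j
      have key : (∑ x, ∑ y, ωl i x * (ωl j y *
            (∑ q, (ω x q * Γ y k q + ω q y * Γ x k q))))
          = (∑ l, ωl j l * Γ l k i) - (∑ l, ωl i l * Γ l k j) := by
        have e1 : (∑ x, ∑ y, ωl i x * (ωl j y *
              (∑ q, (ω x q * Γ y k q + ω q y * Γ x k q))))
            = (∑ x, ∑ y, ∑ q, ωl i x * ω x q * (ωl j y * Γ y k q))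
            + (∑ x, ∑ y, ∑ q, ωl j y * ω q y * (ωl i x * Γ x k q)) := by
          rw [← Finset.sum_add_distrib]
          refine Finset.sum_congr rfl fun x _ => ?_
          rw [← Finset.sum_add_distrib]
          refine Finset.sum_congr rfl fun y _ => ?_
          rw [← Finset.sum_add_distrib, Finset.mul_sum, Finset.mul_sum]
          exact Finset.sum_congr rfl fun q _ => by ring
        rw [e1]
        have t1 := tcontract ωl ω 1 hdu (fun y => ωl j y) (fun y q => Γ y k q) i
        have t2 : (∑ x, ∑ y, ∑ q, ωl j y * ω q y * (ωl i x * Γ x k q))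
            = (-1) * (∑ x, ωl i x * Γ x k j) := by
          rw [Finset.sum_comm]
          exact tcontract ωl (fun y q => ω q y) (-1) hdu'
            (fun x => ωl i x) (fun x q => Γ x k q) j
        rw [t1, t2]; ring
      have hz : (∑ x, ∑ y, ωl i x * (ωl j y *
            (∑ q, (ω x q * Γ y k q + ω q y * Γ x k q)))) = 0 := by
        refine Finset.sum_eq_zero fun x _ => Finset.sum_eq_zero fun y _ => ?_
        rw [H x y k]; ring
      have := key.symm.trans hz
      exact (sub_eq_zero.mp this).symm
    · intro S i j n
      have e1 : (∑ q, (ω i q * Γ j n q + ω q j * Γ i n q))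
          = (∑ q, ∑ a, ω i q * (ω j a * (∑ m, ωl a m * Γ m n q)))
          + (∑ q, ∑ a, ω q j * (ω i a * (∑ m, ωl a m * Γ m n q))) := by
        rw [← Finset.sum_add_distrib]
        refine Finset.sum_congr rfl fun q _ => ?_
        rw [← hraise j n q, ← hraise i n q, Finset.mul_sum, Finset.mul_sum]
      have e3 : (∑ q, ∑ a, ω q j * (ω i a * (∑ m, ωl a m * Γ m n q)))
          = -(∑ q, ∑ a, ω i q * (ω j a * (∑ m, ωl a m * Γ m n q))) := by
        rw [Finset.sum_comm]
        calc (∑ a, ∑ q, ω q j * (ω i a * (∑ m, ωl a m * Γ m n q)))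
            = ∑ a, ∑ q, -(ω i a * (ω j q * (∑ m, ωl q m * Γ m n a))) := by
              refine Finset.sum_congr rfl fun a _ => Finset.sum_congr rfl fun q _ => ?_
              rw [hanti q j, S a n q]; ring
          _ = -(∑ a, ∑ q, ω i a * (ω j q * (∑ m, ωl q m * Γ m n a))) := by
              simp [Finset.sum_neg_distrib]
      rw [e1, e3]; ring
  -- Condition B (torsion-type) ↔ symmetry of T in the 1st and 2nd indices
  have hB : (∀ i j n, ∑ q, (ω i q * Γ j q n + ω q j * Γ i q n) = 0) ↔
      (∀ i k j, (∑ l, ωl i l * Γ l k j) = (∑ l, ωl k l * Γ l i j)) := by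
    constructor
    · intro H i k j
      have key : (∑ x, ∑ y, ωl i x * (ωl k y *
            (∑ q, (ω x q * Γ y q j + ω q y * Γ x q j))))
          = (∑ l, ωl k l * Γ l i j) - (∑ l, ωl i l * Γ l k j) := by
        have e1 : (∑ x, ∑ y, ωl i x * (ωl k y *
              (∑ q, (ω x q * Γ y q j + ω q y * Γ x q j))))
            = (∑ x, ∑ y, ∑ q, ωl i x * ω x q * (ωl k y * Γ y q j))
            + (∑ x, ∑ y, ∑ q, ωl k y * ω q y * (ωl i x * Γ x q j)) := by
          rw [← Finset.sum_add_distrib]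
          refine Finset.sum_congr rfl fun x _ => ?_
          rw [← Finset.sum_add_distrib]
          refine Finset.sum_congr rfl fun y _ => ?_
          rw [← Finset.sum_add_distrib, Finset.mul_sum, Finset.mul_sum]
          exact Finset.sum_congr rfl fun q _ => by ring
        rw [e1]
        have t1 := tcontract ωl ω 1 hdu (fun y => ωl k y) (fun y q => Γ y q j) i
        have t2 : (∑ x, ∑ y, ∑ q, ωl k y * ω q y * (ωl i x * Γ x q j))
            = (-1) * (∑ x, ωl i x * Γ x k j) := by
          rw [Finset.sum_comm]
          exact tcontract ωl (fun y q => ω q y) (-1) hdu'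
            (fun x => ωl i x) (fun x q => Γ x q j) k
        rw [t1, t2]; ring
      have hz : (∑ x, ∑ y, ωl i x * (ωl k y *
            (∑ q, (ω x q * Γ y q j + ω q y * Γ x q j)))) = 0 := by
        refine Finset.sum_eq_zero fun x _ => Finset.sum_eq_zero fun y _ => ?_
        rw [H x y j]; ring
      have := key.symm.trans hz
      exact (sub_eq_zero.mp this).symm
    · intro S i j n
      have e1 : (∑ q, (ω i q * Γ j q n + ω q j * Γ i q n))
          = (∑ q, ∑ a, ω i q * (ω j a * (∑ m, ωl a m * Γ m q n)))
          + (∑ q, ∑ a, ω q j * (ω i a * (∑ m, ωl a m * Γ m q n))) := by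
        rw [← Finset.sum_add_distrib]
        refine Finset.sum_congr rfl fun q _ => ?_
        rw [← hraise j q n, ← hraise i q n, Finset.mul_sum, Finset.mul_sum]
      have e3 : (∑ q, ∑ a, ω q j * (ω i a * (∑ m, ωl a m * Γ m q n)))
          = -(∑ q, ∑ a, ω i q * (ω j a * (∑ m, ωl a m * Γ m q n))) := by
        rw [Finset.sum_comm]
        calc (∑ a, ∑ q, ω q j * (ω i a * (∑ m, ωl a m * Γ m q n)))
            = ∑ a, ∑ q, -(ω i a * (ω j q * (∑ m, ωl q m * Γ m a n))) := by
              refine Finset.sum_congr rfl fun a _ => Finset.sum_congr rfl fun q _ => ?_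
              rw [hanti q j, S a q n]; ring
          _ = -(∑ a, ∑ q, ω i a * (ω j q * (∑ m, ωl q m * Γ m a n))) := by
              simp [Finset.sum_neg_distrib]
      rw [e1, e3]; ring
  constructor
  · intro h
    exact ⟨hA.mpr fun i k j => (h i k j).2, hB.mpr fun i k j => (h i k j).1⟩
  · rintro ⟨h1, h2⟩ i k j
    exact ⟨hB.mp h2 i k j, hA.mp h1 i k j⟩
end

section
/- For Ξ̂ = 0 on a quasitriangular Lie bialgebra, the first super Jacobi identity obstruction vanishes for all v ∈ 𝔤 if and only if n⁽¹⁾⊗n⁽²⁾⊗[v,n⁽³⁾] = 0 for all v, where n = [[r₋,r₋]]. In particular, if 𝔤 is semisimple (so that the ad-action of 𝔤 on 𝔤 has no nonzero invariant vectors in the third factor only when n = 0, since r₊ is zero or nondegenerate), this happens if and only if the Lie bialgebra is triangular (r₊ = 0). -/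
/-!
The obstruction is `(id ⊗ id ⊗ ad v) n` with `n = [r₊₁₂, r₊₂₃]`. Read `r₊` as the
map `T : 𝔤* → 𝔤, f ↦ (f ⊗ id) r₊`, which is `𝔤`-equivariant because `r₊` is
ad-invariant. Contracting the obstruction with `f ⊗ g` says that `T ⁅T f, g⁆` is
central, hence zero; by equivariance it equals `⁅T f, T g⁆`, so the image of `T` is
an abelian ideal. A Lie algebra with trivial radical has none, so `T = 0`, i.e. `r₊ = 0`.
-/

open scoped TensorProduct

namespace TensorProduct

variable {R M N : Type*} [CommRing R] [AddCommGroup M] [Module R M] [AddCommGroup N] [Module R N]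

noncomputable def dualContractLeft : M ⊗[R] N →ₗ[R] Module.Dual R M →ₗ[R] N :=
  lift (LinearMap.smulRightₗ ∘ₗ Module.Dual.eval R M)

@[simp]
theorem dualContractLeft_tmul (m : M) (n : N) (f : Module.Dual R M) :
    dualContractLeft (m ⊗ₜ n) f = f m • n := rfl

theorem dualContractLeft_injective [Module.Free R M] :
    Function.Injective (dualContractLeft : M ⊗[R] N →ₗ[R] Module.Dual R M →ₗ[R] N) := by
  classical
  let b := Module.Free.chooseBasis R M
  have hcoeff : ∀ (x : M ⊗[R] N) i,
      equivFinsuppOfBasisLeft b x i = dualContractLeft x (b.coord i) := by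
    intro x i
    induction x using TensorProduct.induction_on with
    | zero => simp
    | tmul m n => simp
    | add x y hx hy => simp [hx, hy]
  intro x y hxy
  apply (equivFinsuppOfBasisLeft b).injective
  ext i
  rw [hcoeff, hcoeff, hxy]

variable {L : Type*} [LieRing L] [LieAlgebra R L] [LieRingModule L M] [LieModule R L M]
  [LieRingModule L N] [LieModule R L N]

theorem dualContractLeft_lie (v : L) (x : M ⊗[R] N) :
    dualContractLeft ⁅v, x⁆ = ⁅v, dualContractLeft x⁆ := by
  ext f
  induction x using TensorProduct.induction_on with
  | zero => simp
  | tmul m n => simp [LieModule.lie_tmul_right, sub_eq_add_neg, add_comm]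
  | add x y hx hy => simp_all [lie_add]

noncomputable def dualContractLeftLieHom (x : M ⊗[R] N) (hx : ∀ v : L, ⁅v, x⁆ = 0) :
    Module.Dual R M →ₗ⁅R,L⁆ N :=
  { dualContractLeft x with
    map_lie' := fun {v f} => by
      have hv := LinearMap.congr_fun (dualContractLeft_lie v x) f
      rw [hx v, map_zero, LinearMap.zero_apply, LieHom.lie_apply, eq_comm, sub_eq_zero] at hv
      exact hv.symm }

@[simp]
theorem dualContractLeftLieHom_apply (x : M ⊗[R] N) (hx : ∀ v : L, ⁅v, x⁆ = 0)
    (f : Module.Dual R M) : dualContractLeftLieHom x hx f = dualContractLeft x f := rfl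

end TensorProduct

open TensorProduct

namespace LieAlgebra.HasTrivialRadical

variable {R L M : Type*} [CommRing R] [LieRing L] [LieAlgebra R L] [HasTrivialRadical R L]
  [AddCommGroup M] [Module R M] [LieRingModule L M]

theorem lieModuleHom_eq_zero_of_lie_apply_eq_zero (T : M →ₗ⁅R,L⁆ L)
    (hT : ∀ f g, ⁅T f, T g⁆ = 0) : T = 0 := by
  let I : LieIdeal R L := T.range
  have hI : IsLieAbelian I := ⟨by
    rintro ⟨-, f, rfl⟩ ⟨-, g, rfl⟩
    exact Subtype.ext (hT f g)⟩
  have hbot : T.range = ⊥ := (hasTrivialRadical_iff_no_abelian_ideals R L).mp ‹_› I hI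
  ext f
  have hf : T f ∈ T.range := (T.mem_range _).2 ⟨f, rfl⟩
  rwa [hbot, LieSubmodule.mem_bot] at hf

end LieAlgebra.HasTrivialRadical

section

variable {R L ι : Type*} [CommRing R] [LieRing L] [LieAlgebra R L] [Fintype ι] (p q : ι → L)

theorem lie_dualContractLeft_lie_dualContractLeft (v : L) (f g : Module.Dual R L) :
    ⁅v, dualContractLeft (∑ i, p i ⊗ₜ[R] q i)
        ⁅dualContractLeft (∑ i, p i ⊗ₜ[R] q i) f, g⁆⁆ =
      - dualContractLeft (dualContractLeft
          (∑ i, ∑ j, p i ⊗ₜ[R] (⁅q i, p j⁆ ⊗ₜ[R] ⁅v, q j⁆)) f) g := by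
  simp [map_sum, lie_sum, sum_lie, Finset.smul_sum, Finset.sum_neg_distrib, smul_smul]

theorem forall_sum_tmul_lie_tmul_lie_eq_zero_iff
    [Module.Free R L] [LieAlgebra.HasTrivialRadical R L]
    (hinv : ∀ v : L, ⁅v, ∑ i, p i ⊗ₜ[R] q i⁆ = 0) :
    (∀ v : L, ∑ i, ∑ j, p i ⊗ₜ[R] (⁅q i, p j⁆ ⊗ₜ[R] ⁅v, q j⁆) = 0) ↔
      ∑ i, p i ⊗ₜ[R] q i = 0 := by
  set r := ∑ i, p i ⊗ₜ[R] q i with hr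
  constructor
  · intro h
    let T := dualContractLeftLieHom r hinv
    have hcentral : ∀ f g, T ⁅T f, g⁆ = 0 := fun f g => by
      have hc : T ⁅T f, g⁆ ∈ LieAlgebra.center R L := by
        refine (LieModule.mem_maxTrivSubmodule R L L _).2 fun v => ?_
        simp only [T, dualContractLeftLieHom_apply]
        rw [hr, lie_dualContractLeft_lie_dualContractLeft, h v]
        simp only [map_zero, LinearMap.zero_apply, neg_zero]
      rwa [LieAlgebra.center_eq_bot, LieSubmodule.mem_bot] at hc
    have hT : T = 0 := LieAlgebra.HasTrivialRadical.lieModuleHom_eq_zero_of_lie_apply_eq_zero T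
      fun f g => by rw [← T.map_lie, hcentral]
    exact dualContractLeft_injective (LinearMap.ext (LieModuleHom.congr_fun hT))
  · intro hr0 v
    have hrow : ∀ i, ∑ j, ⁅q i, p j⁆ ⊗ₜ[R] ⁅v, q j⁆ =
        map (LieAlgebra.ad R L (q i)) (LieAlgebra.ad R L v) r := fun i => by
      simp [r, map_sum]
    simp_rw [← tmul_sum, hrow, hr0, map_zero, tmul_zero, Finset.sum_const_zero]

end

theorem stmt14_general {L : Type*} [LieRing L] [LieAlgebra ℝ L]
    [LieAlgebra.IsSemisimple ℝ L]
    (N : ℕ) (a b p q : Fin N → L)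
    (hinvp : ∀ v : L, ⁅v, ∑ i, p i ⊗ₜ[ℝ] q i⁆ = 0)
    (hn : (∑ i, ∑ j,
            (⁅a i, a j⁆ ⊗ₜ[ℝ] (b i ⊗ₜ[ℝ] b j)
              + a i ⊗ₜ[ℝ] (⁅b i, a j⁆ ⊗ₜ[ℝ] b j)
              + a i ⊗ₜ[ℝ] (a j ⊗ₜ[ℝ] ⁅b i, b j⁆)))
          = ∑ i, ∑ j, p i ⊗ₜ[ℝ] (⁅q i, p j⁆ ⊗ₜ[ℝ] q j)) :
    (∀ v : L,
        (∑ i, ∑ j,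
          (⁅a i, a j⁆ ⊗ₜ[ℝ] (b i ⊗ₜ[ℝ] ⁅v, b j⁆)
            + a i ⊗ₜ[ℝ] (⁅b i, a j⁆ ⊗ₜ[ℝ] ⁅v, b j⁆)
            + a i ⊗ₜ[ℝ] (a j ⊗ₜ[ℝ] ⁅v, ⁅b i, b j⁆⁆))) = 0)
    ↔ (∑ i, p i ⊗ₜ[ℝ] q i) = 0 := by
  have hobs : ∀ v : L,
      (∑ i, ∑ j,
        (⁅a i, a j⁆ ⊗ₜ[ℝ] (b i ⊗ₜ[ℝ] ⁅v, b j⁆)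
          + a i ⊗ₜ[ℝ] (⁅b i, a j⁆ ⊗ₜ[ℝ] ⁅v, b j⁆)
          + a i ⊗ₜ[ℝ] (a j ⊗ₜ[ℝ] ⁅v, ⁅b i, b j⁆⁆)))
        = ∑ i, ∑ j, p i ⊗ₜ[ℝ] (⁅q i, p j⁆ ⊗ₜ[ℝ] ⁅v, q j⁆) := fun v => by
    simpa [map_sum] using
      congrArg (map LinearMap.id (map LinearMap.id (LieAlgebra.ad ℝ L v))) hn
  exact (forall_congr' fun v => Eq.congr_left (hobs v)).trans
    (forall_sum_tmul_lie_tmul_lie_eq_zero_iff p q hinvp)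

/-- Theorem 4.14, second part.  `(𝔤,r)` quasitriangular with
antisymmetric part `r₋ = Σᵢ aᵢ ⊗ bᵢ` and ad-invariant symmetric part
`r₊ = Σᵢ pᵢ ⊗ qᵢ`; the Schouten element satisfies
`n = [[r₋,r₋]] = [r₊₁₂, r₊₂₃]` (hypothesis `hn`, a consequence of the classical
Yang-Baxter equation `[[r,r]] = 0`).  For the canonical preconnection
`Ξ̂ = 0` the first super Jacobi obstruction of Proposition 4.16 is exactly
`n⁽¹⁾ ⊗ n⁽²⁾ ⊗ [v,n⁽³⁾]`; hence it vanishes for all `v` if and only if this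
tensor vanishes for all `v`, and for `𝔤` semisimple this happens if and only
if the Lie bialgebra is triangular, i.e. `r₊ = 0`. -/
theorem stmt14 {L : Type*} [LieRing L] [LieAlgebra ℝ L] [FiniteDimensional ℝ L]
    [LieAlgebra.IsSemisimple ℝ L]
    (N : ℕ) (a b p q : Fin N → L)
    (hanti : (∑ i, a i ⊗ₜ[ℝ] b i) = - ∑ i, b i ⊗ₜ[ℝ] a i)
    (hsymp : (∑ i, p i ⊗ₜ[ℝ] q i) = ∑ i, q i ⊗ₜ[ℝ] p i)
    (hinvp : ∀ v : L, ⁅v, ∑ i, p i ⊗ₜ[ℝ] q i⁆ = 0)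
    (hn : (∑ i, ∑ j,
            (⁅a i, a j⁆ ⊗ₜ[ℝ] (b i ⊗ₜ[ℝ] b j)
              + a i ⊗ₜ[ℝ] (⁅b i, a j⁆ ⊗ₜ[ℝ] b j)
              + a i ⊗ₜ[ℝ] (a j ⊗ₜ[ℝ] ⁅b i, b j⁆)))
          = ∑ i, ∑ j, p i ⊗ₜ[ℝ] (⁅q i, p j⁆ ⊗ₜ[ℝ] q j)) :
    (∀ v : L,
        (∑ i, ∑ j,
          (⁅a i, a j⁆ ⊗ₜ[ℝ] (b i ⊗ₜ[ℝ] ⁅v, b j⁆)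
            + a i ⊗ₜ[ℝ] (⁅b i, a j⁆ ⊗ₜ[ℝ] ⁅v, b j⁆)
            + a i ⊗ₜ[ℝ] (a j ⊗ₜ[ℝ] ⁅v, ⁅b i, b j⁆⁆))) = 0)
    ↔ (∑ i, p i ⊗ₜ[ℝ] q i) = 0 :=
  stmt14_general N a b p q hinvp hn
end

section
/- For the 3-dimensional left-covariant calculus on the quantum group SU₂ (generators a,b,c,d with ba = qab, ca = qac, db = qbd, dc = qcd, cb = bc, ad = 1 + q⁻¹bc, da = 1 + qbc, q = e^{ℏ/2}), the induced Poisson bracket has {a,b} = −ab/2, {a,c} = −ac/2, {a,d} = −bc, {b,d} = −bd/2, {c,d} = −cd/2, and the semiclassical preconnection satisfies γ(x,τⁱ) = (λᵢ/2)(∂₃x)τⁱ with λ₊ = λ₋ = −1, λ₃ = −2, where ∂₃ is the left-invariant vector field dual to τ³. This preconnection has vanishing curvature: R(x̂,ŷ)(τⁱ) = 0 for all functions x,y. -/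
/-- Semiclassical limit of the 3-dimensional left-covariant
calculus on quantum `SU₂`.  `A` is the (commutative) coordinate algebra of
`SU₂` with generators `a,b,c,d`, `ad − bc = 1`, and the left-invariant vector
fields `Dp = ∂₊`, `Dm = ∂₋`, `D3 = ∂₃` (dual to `τ⁺,τ⁻,τ³`) acting by the
stated values on generators and satisfying the `su₂` commutation relations
`[∂₃,∂₊] = 2∂₊`, `[∂₃,∂₋] = −2∂₋`, `[∂₊,∂₋] = ∂₃`.  The Poisson bracket is
given by the Poisson tensor
`cb(∂₋⊗∂₊−∂₊⊗∂₋) + (bd/2)(∂₊⊗∂₃−∂₃⊗∂₊) + (ca/2)(∂₋⊗∂₃−∂₃⊗∂₋)`.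
Conclusions: the induced bracket takes the stated values on generators
(`{a,b} = −ab/2`, `{a,c} = −ac/2`, `{a,d} = −bc`, `{b,d} = −bd/2`,
`{c,d} = −cd/2`); the semiclassical preconnection
`∇̂_x(η) = ({x,ηᵢ} + (λᵢ/2)(∂₃x)ηᵢ)ᵢ` with `λ₊ = λ₋ = −1`, `λ₃ = −2`
satisfies `γ(x,τⁱ) = (λᵢ/2)(∂₃x)τⁱ` on the basis 1-forms; and its curvature
vanishes: `R(x̂,ŷ) = ∇̂_x∇̂_y − ∇̂_y∇̂_x − ∇̂_{{x,y}} = 0`. -/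
theorem stmt18 {A : Type*} [CommRing A] [Algebra ℝ A]
    (a b c d : A) (Dp Dm D3 : Derivation ℝ A A)
    (had : a * d - b * c = 1)
    (hpa : Dp a = 0) (hpb : Dp b = a) (hpc : Dp c = 0) (hpd : Dp d = c)
    (hma : Dm a = b) (hmb : Dm b = 0) (hmc : Dm c = d) (hmd : Dm d = 0)
    (h3a : D3 a = a) (h3b : D3 b = -b) (h3c : D3 c = c) (h3d : D3 d = -d)
    (h3p : ⁅D3, Dp⁆ = (2 : ℝ) • Dp)
    (h3m : ⁅D3, Dm⁆ = (-2 : ℝ) • Dm)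
    (hpm : ⁅Dp, Dm⁆ = D3) :
    let P : A → A → A := fun x y =>
      c * b * (Dm x * Dp y - Dp x * Dm y)
        + ((1 : ℝ) / 2) • (b * d * (Dp x * D3 y - D3 x * Dp y))
        + ((1 : ℝ) / 2) • (c * a * (Dm x * D3 y - D3 x * Dm y))
    let lam : Fin 3 → ℝ := ![-1, -1, -2]
    let nabla : A → (Fin 3 → A) → (Fin 3 → A) := fun x η i =>
      P x (η i) + (lam i / 2) • (D3 x * η i)
    (P a b = (-(1 : ℝ) / 2) • (a * b)) ∧
    (P a c = (-(1 : ℝ) / 2) • (a * c)) ∧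
    (P a d = -(b * c)) ∧
    (P b d = (-(1 : ℝ) / 2) • (b * d)) ∧
    (P c d = (-(1 : ℝ) / 2) • (c * d)) ∧
    (∀ (x : A) (i j : Fin 3),
      nabla x (fun k => if k = i then 1 else 0) j
        = if j = i then (lam i / 2) • D3 x else 0) ∧
    (∀ (x y : A) (η : Fin 3 → A),
      nabla x (nabla y η) - nabla y (nabla x η) - nabla (P x y) η = 0) := by
  intro P lam nabla
  have cpm : ∀ t : A, Dp (Dm t) = Dm (Dp t) + D3 t := by
    intro t
    have hh := DFunLike.congr_fun hpm t
    rw [Derivation.commutator_apply] at hh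
    linear_combination hh
  have c3p : ∀ t : A, D3 (Dp t) = Dp (D3 t) + (Dp t + Dp t) := by
    intro t
    have hh := DFunLike.congr_fun h3p t
    rw [Derivation.commutator_apply, Derivation.smul_apply, two_smul] at hh
    linear_combination hh
  have c3m : ∀ t : A, D3 (Dm t) = Dm (D3 t) - (Dm t + Dm t) := by
    intro t
    have hh := DFunLike.congr_fun h3m t
    rw [Derivation.commutator_apply, Derivation.smul_apply, neg_smul, two_smul] at hh
    linear_combination hh
  have h6 : ∀ (r : ℝ) (z : A), r • z = algebraMap ℝ A r * z := fun r z => Algebra.smul_def r z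
  have hr2 : (algebraMap ℝ A) ((1 : ℝ)/2) * 2 = 1 := by
    rw [← map_ofNat (algebraMap ℝ A) 2, ← map_mul]; norm_num
  have hneg : (-(1 : ℝ)/2) = -((1 : ℝ)/2) := by norm_num
  refine ⟨?_, ?_, ?_, ?_, ?_, ?_, ?_⟩
  · show P a b = _
    rw [hneg, neg_smul]
    simp only [P, hpa, hpb, hma, hmb, h3a, h3b, h6]
    linear_combination ((-1)*(a)*(b)*((algebraMap ℝ A ((1:ℝ)/2)))) * had
      + ((-1)*(a)*(b)*(b)*(c)) * hr2
  · show P a c = _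
    rw [hneg, neg_smul]
    simp only [P, hpa, hpc, hma, hmc, h3a, h3c, h6]
    linear_combination ((-1)*(a)*(c)*((algebraMap ℝ A ((1:ℝ)/2)))) * had
  · show P a d = _
    simp only [P, hpa, hpd, hma, hmd, h3a, h3d, h6]
    linear_combination ((-2)*(b)*(c)*((algebraMap ℝ A ((1:ℝ)/2)))) * had
      + ((-1)*(b)*(b)*(c)*(c) + (-1)*(b)*(c)) * hr2
  · show P b d = _
    rw [hneg, neg_smul]
    simp only [P, hpb, hpd, hmb, hmd, h3b, h3d, h6]
    linear_combination ((-1)*(b)*(d)*((algebraMap ℝ A ((1:ℝ)/2)))) * had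
  · show P c d = _
    rw [hneg, neg_smul]
    simp only [P, hpc, hpd, hmc, hmd, h3c, h3d, h6]
    linear_combination ((-1)*(c)*(d)*((algebraMap ℝ A ((1:ℝ)/2)))) * had
      + ((-1)*(b)*(c)*(c)*(d)) * hr2
  · intro x i j
    by_cases hji : j = i
    · subst hji
      simp only [nabla, P, if_pos rfl, ite_true, Derivation.map_one_eq_zero, mul_zero, zero_mul,
        sub_zero, zero_sub, mul_one, smul_zero, add_zero, zero_add, neg_zero]
    · simp only [nabla, P, if_neg hji, map_zero, mul_zero, zero_mul, sub_zero, sub_self,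
        smul_zero, add_zero, zero_add]
  · intro x y η
    funext j
    simp only [Pi.sub_apply, Pi.zero_apply, nabla, P]
    generalize lam j / 2 = μ
    simp only [Derivation.map_add, Derivation.map_sub, Derivation.map_smul,
      Derivation.leibniz, smul_eq_mul,
      hpa, hpb, hpc, hpd, hma, hmb, hmc, hmd, h3a, h3b, h3c, h3d,
      cpm, c3p, c3m]
    simp only [h6]
    linear_combination ((1)*(b)*(b)*(c)*(c)*(Dm (η j))*(Dp x)*(D3 y)
      + (-1)*(b)*(b)*(c)*(c)*(Dm (η j))*(Dp y)*(D3 x)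
      + (-1)*(b)*(b)*(c)*(c)*(Dm x)*(Dp (η j))*(D3 y)
      + (1)*(b)*(b)*(c)*(c)*(Dm x)*(Dp y)*(D3 (η j))
      + (1)*(b)*(b)*(c)*(c)*(Dm y)*(Dp (η j))*(D3 x)
      + (-1)*(b)*(b)*(c)*(c)*(Dm y)*(Dp x)*(D3 (η j))) * hr2
end

section
/- In the Fedosov quantisation setup, for q ≥ 1 the map δδ⁻¹ gives a bijection between flat sections {τ ∈ C^∞(W⊗Λ^q) : Dτ = 0} of the Weyl bundle of q-forms and the kernel of δ, {η ∈ C^∞(W⊗Λ^q) : δη = 0}; the inverse sends η to the unique solution τ of the fixed-point equation τ = δ⁻¹(D+δ)τ + η. -/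
/-- Proposition 6.1, abstract form.  Fedosov setup for `q ≥ 1`:
`W = ℕ → V` models the space of sections of the Weyl bundle of `q`-forms,
graded by the filtration degree (the `n`-th coefficient lies in `V`).  The
abelian connection `D` and the operators `δ`, `δ⁻¹` are additive, with
`δ∘δ = 0`, `δ⁻¹∘δ⁻¹ = 0`, the Hodge-type homotopy identity
`δδ⁻¹ + δ⁻¹δ = id`, `D∘D = 0`, and `δ⁻¹(D+δ)` strictly raises the filtration
degree (`hraise`: its `n`-th coefficient only depends on coefficients `< n`).
Then:  the fixed-point equation `τ = δ⁻¹(D+δ)τ + η` has a unique solution for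
every `η`; if `δη = 0` the solution `τ` is a flat section (`Dτ = 0`) with
`δδ⁻¹τ = η`; and every flat section `τ` is recovered from `η = δδ⁻¹τ` by the
fixed-point equation.  In other words `δδ⁻¹` is a bijection from
`{τ : Dτ = 0}` onto `{η : δη = 0}`, with inverse `η ↦` the unique solution of
`τ = δ⁻¹(D+δ)τ + η`. -/
theorem stmt19 {V : Type*} [AddCommGroup V]
    (D δ δinv : (ℕ → V) →+ (ℕ → V))
    (hδ2 : ∀ w, δ (δ w) = 0)
    (hδinv2 : ∀ w, δinv (δinv w) = 0)
    (hhomotopy : ∀ w, δ (δinv w) + δinv (δ w) = w)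
    (hDD : ∀ w, D (D w) = 0)
    (hraise : ∀ (n : ℕ) (w w' : ℕ → V),
      (∀ k, k < n → w k = w' k) →
      δinv (D w + δ w) n = δinv (D w' + δ w') n) :
    (∀ η : ℕ → V, ∃! τ : ℕ → V, τ = δinv (D τ + δ τ) + η) ∧
    (∀ (η τ : ℕ → V), δ η = 0 → τ = δinv (D τ + δ τ) + η →
      D τ = 0 ∧ δ (δinv τ) = η) ∧
    (∀ τ : ℕ → V, D τ = 0 → τ = δinv (D τ + δ τ) + δ (δinv τ)) := by
  have key : ∀ (η w w' : ℕ → V) (n : ℕ), (∀ k, k < n → w k = w' k) →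
      (δinv (D w + δ w) + η) n = (δinv (D w' + δ w') + η) n := by
    intro η w w' n h
    simp only [Pi.add_apply, hraise n w w' h]
  have uniq : ∀ (η τ τ' : ℕ → V), τ = δinv (D τ + δ τ) + η →
      τ' = δinv (D τ' + δ τ') + η → τ = τ' := by
    intro η τ τ' h h'
    funext n
    induction n using Nat.strong_induction_on with
    | _ n ih =>
      conv_lhs => rw [h]
      conv_rhs => rw [h']
      exact key η τ τ' n ih
  have exu : ∀ η : ℕ → V, ∃! τ : ℕ → V, τ = δinv (D τ + δ τ) + η := by
    intro η
    set G : (ℕ → V) → (ℕ → V) := fun w => δinv (D w + δ w) + η with hG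
    have step : ∀ (w w' : ℕ → V) (n : ℕ), (∀ k, k < n → w k = w' k) →
        ∀ k, k < n + 1 → G w k = G w' k := by
      intro w w' n h k hk
      exact key η w w' k (fun j hj => h j (lt_of_lt_of_le hj (Nat.lt_succ_iff.mp hk)))
    have agree : ∀ m, ∀ k, k < m → G^[m] 0 k = G^[m+1] 0 k := by
      intro m
      induction m with
      | zero => intro k hk; omega
      | succ m ih =>
        intro k hk
        rw [Function.iterate_succ_apply', Function.iterate_succ_apply']
        exact step _ _ m ih k hk
    have stab : ∀ n m, n < m → G^[m] 0 n = G^[n+1] 0 n := by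
      intro n m hm
      induction m with
      | zero => omega
      | succ m ih =>
        rcases Nat.lt_succ_iff_lt_or_eq.mp hm with h | h
        · rw [← ih h]; exact (agree m n h).symm
        · subst h; rfl
    set τ : ℕ → V := fun n => G^[n+1] 0 n with hτ
    have hfix : τ = G τ := by
      funext n
      have hag : ∀ k, k < n → τ k = G^[n] 0 k := fun k hk => (stab k n hk).symm
      have h1 : G τ n = G (G^[n] 0) n := step τ (G^[n] 0) n hag n (Nat.lt_succ_self n)
      have h2 : G^[n+1] 0 n = G (G^[n] 0) n := by
        rw [Function.iterate_succ_apply']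
      rw [h1, ← h2]
    exact ⟨τ, hfix, fun τ' h' => uniq η τ' τ h' hfix⟩
  refine ⟨exu, ?_, ?_⟩
  · intro η τ hη heq
    have hDτ : D τ = 0 := by
      have hfixD : D τ = δinv (D (D τ) + δ (D τ)) + 0 := by
        have hδτ : δ τ = δ (δinv (D τ + δ τ)) := by
          conv_lhs => rw [heq]
          rw [map_add, hη, add_zero]
        have hhom := hhomotopy (D τ + δ τ)
        have hδw : δ (D τ + δ τ) = δ (D τ) := by rw [map_add, hδ2, add_zero]
        rw [hδw, ← hδτ] at hhom
        rw [hDD, zero_add, add_zero]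
        rw [add_comm (D τ) (δ τ)] at hhom
        exact (add_left_cancel hhom).symm
      have hzero : (0 : ℕ → V) = δinv (D 0 + δ 0) + 0 := by simp
      exact uniq 0 (D τ) 0 hfixD hzero
    refine ⟨hDτ, ?_⟩
    rw [hDτ, zero_add] at heq
    have hδinvτ : δinv τ = δinv η := by
      conv_lhs => rw [heq]
      rw [map_add, hδinv2, zero_add]
    rw [hδinvτ]
    have h3 := hhomotopy η
    rw [hη, map_zero, add_zero] at h3
    exact h3
  · intro τ hτ
    rw [hτ, zero_add, add_comm]
    exact (hhomotopy τ).symm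
end
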